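/- Let q₁',...,q_k' be k vectors in a linear subspace H of dimension k−1. Let S be a maximal linearly independent subset of {q₁',...,q_k'} of maximum volume (among independent subsets of that size), and let q_j' ∉ S. Write q_j' = Σ_{q_i' ∈ S} α_i q_i'. Then |α_i| ≤ 1 for every i with q_i' ∈ S. -/

import Mathlib

/-!
Exchanging `q' i` for `q' j = ∑ α l • q' l` in `S` changes the family by the identity matrix
with its `i`-th row replaced by `α`, whose determinant is `α i`. The Gram matrix transforms by
congruence with this matrix, so the exchanged family has volume `|α i|` times that of `S`; if
`α i ≠ 0` it is again independent, and maximality of `S` gives `|α i| ≤ 1`.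
-/

abbrev Pt (d : ℕ) := EuclideanSpace ℝ (Fin d)

noncomputable def gvol {d : ℕ} {ι : Type} [Fintype ι] [DecidableEq ι]
    (v : ι → Pt d) : ℝ :=
  Real.sqrt (Matrix.det (Matrix.of fun i j => (inner ℝ (v i) (v j) : ℝ)))

open Matrix Function

theorem Matrix.gram_sum_smul {E ι : Type*} [SeminormedAddCommGroup E] [InnerProductSpace ℝ E]
    [Fintype ι] (v : ι → E) (M : Matrix ι ι ℝ) :
    gram ℝ (fun a => ∑ l, M a l • v l) = M * gram ℝ v * Mᵀ := by
  ext a b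
  simp only [gram_apply, mul_apply, transpose_apply, inner_sum, sum_inner,
    real_inner_smul_left, real_inner_smul_right, Finset.sum_mul]
  refine Finset.sum_congr rfl fun _ _ => Finset.sum_congr rfl fun _ _ => ?_
  rw [real_inner_comm]
  ring

theorem Matrix.det_one_updateRow {n R : Type*} [Fintype n] [DecidableEq n] [CommRing R]
    (j : n) (c : n → R) : ((1 : Matrix n n R).updateRow j c).det = c j := by
  have hc : ∑ k, c k • (1 : Matrix n n R) k = c := by
    ext
    simp [one_apply]
  simpa [hc] using det_updateRow_sum (1 : Matrix n n R) j c

section gvol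

variable {d : ℕ} {ι κ : Type} [Fintype ι] [DecidableEq ι] [Fintype κ] [DecidableEq κ]

theorem gvol_eq_sqrt_det_gram (v : ι → Pt d) : gvol v = √(gram ℝ v).det := rfl

theorem gvol_pos_iff_linearIndependent {v : ι → Pt d} :
    0 < gvol v ↔ LinearIndependent ℝ v := by
  rw [gvol_eq_sqrt_det_gram, Real.sqrt_pos, ← det_gram_ne_zero_iff_linearIndependent,
    ((posSemidef_gram ℝ v).det_nonneg).lt_iff_ne']

theorem gvol_comp_equiv (v : ι → Pt d) (e : κ ≃ ι) : gvol (v ∘ e) = gvol v := by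
  show √((gram ℝ v).submatrix e e).det = √(gram ℝ v).det
  rw [det_submatrix_equiv_self]

theorem gvol_update_sum_smul (v : ι → Pt d) (i : ι) (c : ι → ℝ) :
    gvol (update v i (∑ l, c l • v l)) = |c i| * gvol v := by
  have hcomb : update v i (∑ l, c l • v l) =
      fun a => ∑ l, (1 : Matrix ι ι ℝ).updateRow i c a l • v l := by
    funext a
    rcases eq_or_ne a i with rfl | ha
    · simp
    · simp [ha, one_apply]
  rw [hcomb, gvol_eq_sqrt_det_gram, gram_sum_smul, det_mul, det_mul, det_transpose,
    det_one_updateRow, gvol_eq_sqrt_det_gram, mul_comm _ (c i), ← mul_assoc, ← sq,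
    Real.sqrt_mul (sq_nonneg _), Real.sqrt_sq_eq_abs]

end gvol

theorem Finset.exists_equiv_map_swap {κ E : Type*} [DecidableEq κ] (q : κ → E) {S : Finset κ}
    {i j : κ} (hi : i ∈ S) (hj : j ∉ S) :
    ∃ e : S ≃ S.map (Equiv.swap i j).toEmbedding,
      (fun x : S.map (Equiv.swap i j).toEmbedding => q x) ∘ e =
        update (fun x : S => q x) ⟨i, hi⟩ (q j) := by
  refine ⟨(Equiv.swap i j).subtypeEquiv fun a => by simp, ?_⟩
  funext x
  rcases eq_or_ne x ⟨i, hi⟩ with rfl | hx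
  · simp
  · have hxi : x.1 ≠ i := fun h => hx (Subtype.ext h)
    have hxj : x.1 ≠ j := fun h => hj (h ▸ x.2)
    simp [hx, Equiv.swap_apply_of_ne_of_ne hxi hxj]

theorem maxvol_subset_coeff_le_one_general {d k : ℕ}
    (q' : Fin k → Pt d)
    (S : Finset (Fin k))
    (hind : LinearIndependent ℝ (fun i : {x // x ∈ S} => q' i.1))
    (hmaxvol : ∀ S' : Finset (Fin k), S'.card = S.card →
      LinearIndependent ℝ (fun i : {x // x ∈ S'} => q' i.1) →
      gvol (fun i : {x // x ∈ S'} => q' i.1) ≤ gvol (fun i : {x // x ∈ S} => q' i.1))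
    (j : Fin k) (hj : j ∉ S) (α : Fin k → ℝ)
    (hrep : q' j = ∑ i ∈ S, α i • q' i) :
    ∀ i ∈ S, |α i| ≤ 1 := by
  intro i hi
  rcases eq_or_ne (α i) 0 with hαi | hαi
  · simp [hαi]
  obtain ⟨e, he⟩ := Finset.exists_equiv_map_swap q' hi hj
  rw [hrep, ← Finset.sum_coe_sort S] at he
  have hvol : gvol (fun x : S.map (Equiv.swap i j).toEmbedding => q' x) =
      |α i| * gvol (fun x : S => q' x) := by
    rw [← gvol_comp_equiv _ e, he, gvol_update_sum_smul]
  have hind' : LinearIndependent ℝ (fun x : S.map (Equiv.swap i j).toEmbedding => q' x) := by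
    rw [← gvol_pos_iff_linearIndependent, hvol]
    exact mul_pos (abs_pos.2 hαi) (gvol_pos_iff_linearIndependent.2 hind)
  have hle := hmaxvol _ (Finset.card_map _) hind'
  rw [hvol] at hle
  exact (mul_le_iff_le_one_left (gvol_pos_iff_linearIndependent.2 hind)).1 hle

/-- Let `q' 0, …, q' (k-1)` lie in a `(k-1)`-dimensional subspace `H`.  If `S` is a
maximal linearly independent subset of maximum volume (among independent subsets of
its size) and `q' j ∉ S` is written as `q' j = ∑_{i ∈ S} α i • q' i`, then every
coefficient satisfies `|α i| ≤ 1`. -/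
theorem maxvol_subset_coeff_le_one {d k : ℕ} (H : Submodule ℝ (Pt d))
    (hH : Module.finrank ℝ H = k - 1)
    (q' : Fin k → Pt d) (hmem : ∀ i, q' i ∈ H)
    (S : Finset (Fin k))
    (hind : LinearIndependent ℝ (fun i : {x // x ∈ S} => q' i.1))
    (hspan : ∀ j : Fin k, q' j ∈ Submodule.span ℝ (q' '' ↑S))
    (hmaxvol : ∀ S' : Finset (Fin k), S'.card = S.card →
      LinearIndependent ℝ (fun i : {x // x ∈ S'} => q' i.1) →
      gvol (fun i : {x // x ∈ S'} => q' i.1) ≤ gvol (fun i : {x // x ∈ S} => q' i.1))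
    (j : Fin k) (hj : j ∉ S) (α : Fin k → ℝ)
    (hrep : q' j = ∑ i ∈ S, α i • q' i) :
    ∀ i ∈ S, |α i| ≤ 1 :=
  maxvol_subset_coeff_le_one_general q' S hind hmaxvol j hj α hrep
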